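/- Let (β_k) ⊆ [1,∞) and (γ_k) ⊆ (0,∞) satisfy β₁ = 1, 0 < (β_{k+1} − 1)γ_{k+1} ≤ β_kγ_k and 2Lγ_k ≤ β_k for all k ≥ 1, and let G > 0. Let sequences (x_k), (z_k) in X and (δ_k) in ℝⁿ with ‖δ_k‖ ≤ 2G satisfy, for each k ≥ 1: y_k = (1 − 1/β_k)x_k + (1/β_k)z_k; z_{k+1} ∈ X satisfies γ_k(⟨∇φ(y_k) + δ_k, z_{k+1}⟩ + ψ(z_{k+1})) + ½‖z_{k+1} − z_k‖² ≤ γ_k(⟨∇φ(y_k) + δ_k, u⟩ + ψ(u)) + ½‖u − z_k‖² for all u ∈ X; and x_{k+1} = (1 − 1/β_k)x_k + (1/β_k)z_{k+1}. Suppose x* ∈ X minimizes Φ over X. Then for every k ≥ 2: Φ(x_k) − Φ(x*) ≤ (1/((β_k − 1)γ_k))·(½D² + 2GD·Σ_{i=1}^{k−1} γ_i). -/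

import Mathlib

open RealInnerProductSpace

variable {n : ℕ}

local notation "E" => EuclideanSpace ℝ (Fin n)

lemma combo_norm_sq (a b z : E) (t : ℝ) :
    ‖((1 - t) • a + t • b) - z‖ ^ 2 =
      (1 - t) * ‖a - z‖ ^ 2 + t * ‖b - z‖ ^ 2 - t * (1 - t) * ‖a - b‖ ^ 2 := by
  have h1 : ((1 - t) • a + t • b) - z = (1 - t) • (a - z) + t • (b - z) := by
    rw [smul_sub, smul_sub]; module
  have h2 : a - b = (a - z) - (b - z) := by abel
  have e2 : ‖a - b‖ ^ 2 = ‖a - z‖ ^ 2 - 2 * ⟪a - z, b - z⟫ + ‖b - z‖ ^ 2 := by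
    rw [h2]; exact norm_sub_sq_real _ _
  rw [h1, norm_add_sq_real, e2, norm_smul, norm_smul,
    real_inner_smul_left, real_inner_smul_right]
  simp only [mul_pow, sq_abs, Real.norm_eq_abs]
  ring

lemma grad_convex_le (φ : E → ℝ) (hφ : ConvexOn ℝ Set.univ φ)
    (φ' : E → E) (hgrad : ∀ x, HasGradientAt φ (φ' x) x) (a b : E) :
    φ a + ⟪φ' a, b - a⟫ ≤ φ b := by
  have hc : HasDerivAt (fun t : ℝ => (t : ℝ) • (b - a) + a) (b - a) 0 := by
    simpa using ((hasDerivAt_id (0:ℝ)).smul_const (b - a)).add_const a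
  have h0 : HasFDerivAt φ ((InnerProductSpace.toDual ℝ _) (φ' a)) ((0:ℝ) • (b - a) + a) := by
    simpa using (hgrad a).hasFDerivAt
  have hcomp : HasDerivAt (fun t : ℝ => φ (t • (b - a) + a)) ⟪φ' a, b - a⟫ 0 := by
    have h1 := h0.comp_hasDerivAt 0 hc
    simp only [InnerProductSpace.toDual_apply_apply] at h1
    exact h1
  have hslope : Filter.Tendsto (slope (fun t : ℝ => φ (t • (b - a) + a)) 0)
      (nhdsWithin 0 {(0:ℝ)}ᶜ) (nhds ⟪φ' a, b - a⟫) :=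
    hasDerivAt_iff_tendsto_slope.1 hcomp
  have hmono : nhdsWithin (0:ℝ) (Set.Ioi 0) ≤ nhdsWithin 0 {(0:ℝ)}ᶜ :=
    nhdsWithin_mono 0 (fun t ht => ne_of_gt ht)
  have hslope' := hslope.mono_left hmono
  have hle : ∀ᶠ t in nhdsWithin (0:ℝ) (Set.Ioi 0),
      slope (fun t : ℝ => φ (t • (b - a) + a)) 0 t ≤ φ b - φ a := by
    filter_upwards [Ioc_mem_nhdsGT_of_mem (Set.left_mem_Ico.2 one_pos)] with t ht
    have ht0 : 0 < t := ht.1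
    have hcvx := hφ.2 (Set.mem_univ a) (Set.mem_univ b) (by linarith [ht.2] : (0:ℝ) ≤ 1 - t)
      ht0.le (by ring)
    have heq : (1 - t) • a + t • b = t • (b - a) + a := by module
    rw [heq] at hcvx
    simp only [smul_eq_mul] at hcvx
    rw [slope_def_field]
    simp only [zero_smul, zero_add, sub_zero]
    rw [div_le_iff₀ ht0]
    nlinarith
  have := le_of_tendsto hslope' hle
  linarith

lemma descent_lemma {X : Set E} (hXconv : Convex ℝ X)
    (φ : E → ℝ) (φ' : E → E) (hgrad : ∀ x, HasGradientAt φ (φ' x) x)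
    (L : ℝ) (hL0 : 0 ≤ L) (hLip : ∀ x ∈ X, ∀ y ∈ X, ‖φ' x - φ' y‖ ≤ L * ‖x - y‖)
    {a b : E} (ha : a ∈ X) (hb : b ∈ X) :
    φ b ≤ φ a + ⟪φ' a, b - a⟫ + L * ‖b - a‖ ^ 2 := by
  set h : E → ℝ := fun u => φ u - ⟪φ' a, u⟫ with hdef
  have hseg : segment ℝ a b ⊆ X := hXconv.segment_subset ha hb
  have hfd : ∀ u ∈ segment ℝ a b, HasFDerivWithinAt h
      ((InnerProductSpace.toDual ℝ _) (φ' u - φ' a) : E →L[ℝ] ℝ) (segment ℝ a b) u := by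
    intro u hu
    have h1 : HasFDerivAt φ ((InnerProductSpace.toDual ℝ _) (φ' u)) u :=
      (hgrad u).hasFDerivAt
    have h2 : HasFDerivAt (fun v : E => ⟪φ' a, v⟫)
        ((InnerProductSpace.toDual ℝ _) (φ' a) : E →L[ℝ] ℝ) u := by
      convert ((InnerProductSpace.toDual ℝ E) (φ' a) : E →L[ℝ] ℝ).hasFDerivAt (x := u) using 1
      ext v
      simp [InnerProductSpace.toDual_apply_apply]
    have := h1.sub h2
    rw [← map_sub] at this
    exact this.hasFDerivWithinAt
  have hbound : ∀ u ∈ segment ℝ a b,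
      ‖((InnerProductSpace.toDual ℝ _) (φ' u - φ' a) : E →L[ℝ] ℝ)‖ ≤ L * ‖b - a‖ := by
    intro u hu
    rw [LinearIsometryEquiv.norm_map]
    calc ‖φ' u - φ' a‖ ≤ L * ‖u - a‖ := hLip u (hseg hu) a ha
    _ ≤ L * ‖b - a‖ := by
        obtain ⟨s, t, hs, ht, hst, rfl⟩ := hu
        have : s • a + t • b - a = t • (b - a) := by
          have hs1 : s = 1 - t := by linarith
          rw [hs1]; module
        rw [this, norm_smul, Real.norm_eq_abs, abs_of_nonneg ht]
        have ht1 : t ≤ 1 := by linarith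
        nlinarith [mul_nonneg (mul_nonneg hL0 (by linarith : (0:ℝ) ≤ 1 - t)) (norm_nonneg (b - a))]
  have := Convex.norm_image_sub_le_of_norm_hasFDerivWithin_le hfd hbound
    (convex_segment a b) (left_mem_segment ℝ a b) (right_mem_segment ℝ a b)
  have hhb : h b - h a ≤ L * ‖b - a‖ * ‖b - a‖ := le_trans (le_abs_self _) this
  have : φ b - ⟪φ' a, b⟫ - (φ a - ⟪φ' a, a⟫) ≤ L * ‖b - a‖ * ‖b - a‖ := hhb
  rw [inner_sub_right]
  nlinarith [this]

lemma three_point {X : Set E} (hX : Convex ℝ X) (ψ : E → ℝ)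
    (hψ : ConvexOn ℝ Set.univ ψ) (c : E) (g : ℝ) (hg : 0 < g) (z zp : E) (hzpX : zp ∈ X)
    (hmin : ∀ u ∈ X, g * (⟪c, zp⟫ + ψ zp) + ‖zp - z‖ ^ 2 / 2 ≤
      g * (⟪c, u⟫ + ψ u) + ‖u - z‖ ^ 2 / 2)
    (u : E) (hu : u ∈ X) :
    g * (⟪c, zp⟫ + ψ zp) + ‖zp - z‖ ^ 2 / 2 + ‖u - zp‖ ^ 2 / 2 ≤
      g * (⟪c, u⟫ + ψ u) + ‖u - z‖ ^ 2 / 2 := by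
  have key : ∀ t : ℝ, 0 < t → t ≤ 1 →
      g * (⟪c, zp⟫ + ψ zp) + ‖zp - z‖ ^ 2 / 2 + ‖u - zp‖ ^ 2 / 2 ≤
        g * (⟪c, u⟫ + ψ u) + ‖u - z‖ ^ 2 / 2 + t / 2 * ‖u - zp‖ ^ 2 := by
    intro t ht0 ht1
    have hmem : (1 - t) • zp + t • u ∈ X := hX hzpX hu (by linarith) ht0.le (by ring)
    have h1 := hmin _ hmem
    have h2 : ψ ((1 - t) • zp + t • u) ≤ (1 - t) * ψ zp + t * ψ u := by
      simpa using hψ.2 (Set.mem_univ zp) (Set.mem_univ u) (by linarith : (0:ℝ) ≤ 1 - t)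
        ht0.le (by ring)
    have h3 : ⟪c, (1 - t) • zp + t • u⟫ = (1 - t) * ⟪c, zp⟫ + t * ⟪c, u⟫ := by
      rw [inner_add_right, real_inner_smul_right, real_inner_smul_right]
    have h4 := combo_norm_sq zp u z t
    have h5 := mul_le_mul_of_nonneg_left h2 hg.le
    have h6 : ‖zp - u‖ = ‖u - zp‖ := norm_sub_rev _ _
    rw [h3, h4, h6] at h1
    have h7 : 0 < t := ht0
    -- h1 : F zp ≤ g*((1-t)⟪c,zp⟫+t⟪c,u⟫ + ψ combo) + ((1-t)‖zp-z‖² + t‖u-z‖² - t(1-t)‖u-zp‖²)/2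
    nlinarith [h1, h5, sq_nonneg ‖u - zp‖, mul_pos ht0 hg]
  apply le_of_forall_pos_le_add
  intro ε hε
  set s := ‖u - zp‖ ^ 2 with hs
  have hs0 : 0 ≤ s := sq_nonneg _
  set t : ℝ := min 1 (2 * ε / (s + 1)) with htdef
  have ht0 : 0 < t := lt_min one_pos (by positivity)
  have ht1 : t ≤ 1 := min_le_left _ _
  have htle : t ≤ 2 * ε / (s + 1) := min_le_right _ _
  have hbound : t / 2 * s ≤ ε := by
    have h1 : t / 2 * s ≤ (2 * ε / (s + 1)) / 2 * s := by
      apply mul_le_mul_of_nonneg_right _ hs0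
      linarith
    have h2 : (2 * ε / (s + 1)) / 2 * s ≤ ε := by
      rw [div_div, div_mul_eq_mul_div, div_le_iff₀ (by positivity : (0:ℝ) < (s+1) * 2)]
      nlinarith
    linarith
  have := key t ht0 ht1
  linarith
set_option maxHeartbeats 1600000 in
/-- Deterministic bound for the accelerated stochastic gradient scheme with bounded
noise: if `β₁ = 1`, `0 < (β_{k+1}−1)γ_{k+1} ≤ β_kγ_k`, `2Lγ_k ≤ β_k`, and `‖δ_k‖ ≤ 2G`,
then for `k ≥ 2`,
`Φ(x_k) − Φ(x*) ≤ (1/((β_k−1)γ_k))·(½D² + 2GD·Σ_{i=1}^{k−1} γ_i)`. -/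
theorem asg_deterministic_bound {n : ℕ}
    (X : Set (EuclideanSpace ℝ (Fin n))) (hXne : X.Nonempty)
    (hXcompact : IsCompact X) (hXconv : Convex ℝ X)
    (D : ℝ) (hD : 0 < D) (hdiam : ∀ x ∈ X, ∀ y ∈ X, ‖x - y‖ ≤ D)
    (ψ φ : EuclideanSpace ℝ (Fin n) → ℝ)
    (hψ : ConvexOn ℝ Set.univ ψ) (hφ : ConvexOn ℝ Set.univ φ)
    (φ' : EuclideanSpace ℝ (Fin n) → EuclideanSpace ℝ (Fin n))
    (hφgrad : ∀ x, HasGradientAt φ (φ' x) x)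
    (L : ℝ) (hL : 0 < L)
    (hLip : ∀ x ∈ X, ∀ y ∈ X, ‖φ' x - φ' y‖ ≤ L * ‖x - y‖)
    (β γ : ℕ → ℝ) (hβ1 : β 1 = 1)
    (hβ : ∀ k, 1 ≤ k → 1 ≤ β k) (hγpos : ∀ k, 1 ≤ k → 0 < γ k)
    (hcoupling : ∀ k, 1 ≤ k →
      0 < (β (k + 1) - 1) * γ (k + 1) ∧ (β (k + 1) - 1) * γ (k + 1) ≤ β k * γ k)
    (hstep : ∀ k, 1 ≤ k → 2 * L * γ k ≤ β k)
    (G : ℝ) (hG : 0 < G)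
    (x z y δ : ℕ → EuclideanSpace ℝ (Fin n))
    (hxX : ∀ k, 1 ≤ k → x k ∈ X) (hzX : ∀ k, 1 ≤ k → z k ∈ X)
    (hδ : ∀ k, 1 ≤ k → ‖δ k‖ ≤ 2 * G)
    (hy : ∀ k, 1 ≤ k → y k = (1 - (β k)⁻¹) • x k + (β k)⁻¹ • z k)
    (hprox : ∀ k, 1 ≤ k → ∀ u ∈ X,
      γ k * (⟪φ' (y k) + δ k, z (k + 1)⟫ + ψ (z (k + 1))) + ‖z (k + 1) - z k‖ ^ 2 / 2 ≤
        γ k * (⟪φ' (y k) + δ k, u⟫ + ψ u) + ‖u - z k‖ ^ 2 / 2)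
    (hxrec : ∀ k, 1 ≤ k → x (k + 1) = (1 - (β k)⁻¹) • x k + (β k)⁻¹ • z (k + 1))
    (xstar : EuclideanSpace ℝ (Fin n)) (hxstarX : xstar ∈ X)
    (hxstaropt : ∀ u ∈ X, φ xstar + ψ xstar ≤ φ u + ψ u) :
    ∀ k, 2 ≤ k →
      (φ (x k) + ψ (x k)) - (φ xstar + ψ xstar) ≤
        1 / ((β k - 1) * γ k) *
          (D ^ 2 / 2 + 2 * G * D * ∑ i ∈ Finset.Icc 1 (k - 1), γ i) := by
  have step : ∀ k, 1 ≤ k →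
      β k * γ k * ((φ (x (k+1)) + ψ (x (k+1))) - (φ xstar + ψ xstar)) +
          ‖xstar - z (k+1)‖ ^ 2 / 2 ≤
        (β k - 1) * γ k * ((φ (x k) + ψ (x k)) - (φ xstar + ψ xstar)) +
          ‖xstar - z k‖ ^ 2 / 2 + 2 * G * D * γ k := by
    intro k hk
    have hb := hβ k hk
    have hb0 : (0:ℝ) < β k := lt_of_lt_of_le one_pos hb
    have hg := hγpos k hk
    set θ := (β k)⁻¹ with hθdef
    have hθ0 : 0 < θ := inv_pos.2 hb0
    have hθ1 : θ ≤ 1 := by rw [hθdef]; exact inv_le_one_of_one_le₀ hb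
    have hyk : y k = (1 - θ) • x k + θ • z k := hy k hk
    have hyX : y k ∈ X := by
      rw [hyk]; exact hXconv (hxX k hk) (hzX k hk) (by linarith) hθ0.le (by ring)
    have hx' : x (k+1) = (1 - θ) • x k + θ • z (k+1) := hxrec k hk
    have hzX' : z (k+1) ∈ X := hzX (k+1) (by omega)
    have hxX' : x (k+1) ∈ X := hxX (k+1) (by omega)
    have hv1 : x (k+1) - y k = θ • (z (k+1) - z k) := by rw [hx', hyk]; module
    have hdesc : φ (x (k+1)) ≤ φ (y k) + ⟪φ' (y k), x (k+1) - y k⟫ +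
        L * ‖x (k+1) - y k‖ ^ 2 :=
      descent_lemma hXconv φ φ' hφgrad L hL.le hLip hyX hxX'
    rw [hv1] at hdesc
    have hnorm : ‖θ • (z (k+1) - z k)‖ ^ 2 = θ ^ 2 * ‖z (k+1) - z k‖ ^ 2 := by
      rw [norm_smul]; simp [mul_pow, sq_abs]
    have hinn : ⟪φ' (y k), θ • (z (k+1) - z k)⟫ = θ * ⟪φ' (y k), z (k+1) - z k⟫ :=
      real_inner_smul_right _ _ _
    rw [hnorm, hinn] at hdesc
    have hvec : θ • (z (k+1) - z k) = (1 - θ) • (x k - y k) + θ • (z (k+1) - y k) := by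
      rw [hyk]; module
    have hdecomp : θ * ⟪φ' (y k), z (k+1) - z k⟫ =
        (1 - θ) * ⟪φ' (y k), x k - y k⟫ + θ * ⟪φ' (y k), z (k+1) - y k⟫ := by
      have h := congrArg (fun v : EuclideanSpace ℝ (Fin n) => ⟪φ' (y k), v⟫) hvec
      simpa only [inner_add_right, real_inner_smul_right] using h
    have hψ' : ψ (x (k+1)) ≤ (1 - θ) * ψ (x k) + θ * ψ (z (k+1)) := by
      rw [hx']
      simpa using hψ.2 (Set.mem_univ (x k)) (Set.mem_univ (z (k+1)))
        (by linarith : (0:ℝ) ≤ 1 - θ) hθ0.le (by ring)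
    have hc1 : φ (y k) + ⟪φ' (y k), x k - y k⟫ ≤ φ (x k) :=
      grad_convex_le φ hφ φ' hφgrad (y k) (x k)
    have hc2 : φ (y k) + ⟪φ' (y k), xstar - y k⟫ ≤ φ xstar :=
      grad_convex_le φ hφ φ' hφgrad (y k) xstar
    have htp := three_point hXconv ψ hψ (φ' (y k) + δ k) (γ k) hg (z k) (z (k+1)) hzX'
      (hprox k hk) xstar hxstarX
    set Q := ‖z (k+1) - z k‖ ^ 2 with hQdef
    set R := ‖xstar - z k‖ ^ 2 / 2 with hRdef
    set R' := ‖xstar - z (k+1)‖ ^ 2 / 2 with hR'def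
    have hQ0 : 0 ≤ Q := sq_nonneg _
    have htp' : ⟪φ' (y k) + δ k, z (k+1)⟫ + ψ (z (k+1)) ≤
        ⟪φ' (y k) + δ k, xstar⟫ + ψ xstar + (R - R' - Q / 2) / γ k := by
      have key : (⟪φ' (y k) + δ k, z (k+1)⟫ + ψ (z (k+1))) -
          (⟪φ' (y k) + δ k, xstar⟫ + ψ xstar) ≤ (R - R' - Q / 2) / γ k := by
        rw [le_div_iff₀ hg]
        nlinarith [htp]
      linarith
    have he1 : ⟪φ' (y k) + δ k, z (k+1)⟫ =
        ⟪φ' (y k), z (k+1) - y k⟫ + ⟪φ' (y k), y k⟫ + ⟪δ k, z (k+1)⟫ := by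
      rw [inner_add_left, inner_sub_right]; ring
    have he2 : ⟪φ' (y k) + δ k, xstar⟫ =
        ⟪φ' (y k), xstar - y k⟫ + ⟪φ' (y k), y k⟫ + ⟪δ k, xstar⟫ := by
      rw [inner_add_left, inner_sub_right]; ring
    have hN : ⟪δ k, xstar⟫ - ⟪δ k, z (k+1)⟫ ≤ 2 * G * D := by
      rw [← inner_sub_right]
      calc ⟪δ k, xstar - z (k+1)⟫ ≤ ‖δ k‖ * ‖xstar - z (k+1)‖ := real_inner_le_norm _ _
      _ ≤ (2 * G) * D := mul_le_mul (hδ k hk) (hdiam xstar hxstarX _ hzX')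
          (norm_nonneg _) (by positivity)
      _ = 2 * G * D := by ring
    rw [he1, he2] at htp'
    have E3 : φ (y k) + ⟪φ' (y k), x k - y k⟫ + ψ (x k) ≤ φ (x k) + ψ (x k) := by linarith
    have E6 : φ (y k) + ⟪φ' (y k), z (k+1) - y k⟫ + ψ (z (k+1)) ≤
        φ xstar + ψ xstar + 2 * G * D + (R - R' - Q / 2) / γ k := by linarith
    have E3' := mul_le_mul_of_nonneg_left E3 (by linarith : (0:ℝ) ≤ 1 - θ)
    have E6' := mul_le_mul_of_nonneg_left E6 hθ0.le
    have hsum : φ (x (k+1)) + ψ (x (k+1)) ≤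
        (1 - θ) * (φ (x k) + ψ (x k)) +
        θ * (φ xstar + ψ xstar + 2 * G * D + (R - R' - Q / 2) / γ k) +
        L * θ ^ 2 * Q := by linarith [hdesc, hdecomp, hψ', E3', E6']
    have h2 := mul_le_mul_of_nonneg_left hsum (mul_pos hb0 hg).le
    have hrhs : β k * γ k * ((1 - θ) * (φ (x k) + ψ (x k)) +
        θ * (φ xstar + ψ xstar + 2 * G * D + (R - R' - Q / 2) / γ k) +
        L * θ ^ 2 * Q) =
        (β k - 1) * γ k * (φ (x k) + ψ (x k)) + γ k * (φ xstar + ψ xstar) +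
        2 * G * D * γ k + (R - R' - Q / 2) + L * γ k * θ * Q := by
      rw [hθdef]
      field_simp
      ring
    rw [hrhs] at h2
    have hLgθ : L * γ k * θ ≤ 1 / 2 := by
      rw [hθdef, ← div_eq_mul_inv, div_le_iff₀ hb0]
      linarith [hstep k hk]
    have hhalf : L * γ k * θ * Q ≤ Q / 2 := by nlinarith [hQ0]
    nlinarith [h2, hhalf]
  have hnonneg : ∀ k, 1 ≤ k →
      0 ≤ (φ (x k) + ψ (x k)) - (φ xstar + ψ xstar) := fun k hk => by
    linarith [hxstaropt (x k) (hxX k hk)]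
  have tel : ∀ k, 1 ≤ k →
      (β k - 1) * γ k * ((φ (x k) + ψ (x k)) - (φ xstar + ψ xstar)) +
          ‖xstar - z k‖ ^ 2 / 2 ≤
        ‖xstar - z 1‖ ^ 2 / 2 + 2 * G * D * ∑ i ∈ Finset.Icc 1 (k - 1), γ i := by
    intro k hk
    induction k, hk using Nat.le_induction with
    | base =>
      have hempty : Finset.Icc 1 0 = (∅ : Finset ℕ) := by simp
      rw [hβ1, hempty]
      simp
    | succ m hm ih =>
      have hstep2 : (β (m+1) - 1) * γ (m+1) *
          ((φ (x (m+1)) + ψ (x (m+1))) - (φ xstar + ψ xstar)) +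
          ‖xstar - z (m+1)‖ ^ 2 / 2 ≤
          (β m - 1) * γ m * ((φ (x m) + ψ (x m)) - (φ xstar + ψ xstar)) +
          ‖xstar - z m‖ ^ 2 / 2 + 2 * G * D * γ m := by
        have h1 := step m hm
        have h2 := mul_le_mul_of_nonneg_right (hcoupling m hm).2
          (hnonneg (m+1) (by omega))
        linarith
      rw [Nat.add_sub_cancel]
      obtain ⟨p, rfl⟩ : ∃ p, m = p + 1 := ⟨m - 1, by omega⟩
      rw [Finset.sum_Icc_succ_top (by omega : 1 ≤ p + 1) γ]
      rw [Nat.add_sub_cancel] at ih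
      have hγm : 0 < γ (p+1) := hγpos (p+1) hm
      linarith
  intro k hk2
  have hk1 : 1 ≤ k := by omega
  have hpos : 0 < (β k - 1) * γ k := by
    obtain ⟨m, rfl⟩ : ∃ m, k = m + 1 := ⟨k - 1, by omega⟩
    exact (hcoupling m (by omega)).1
  have htel := tel k hk1
  have hr1 : ‖xstar - z 1‖ ^ 2 / 2 ≤ D ^ 2 / 2 := by
    have h1 := hdiam xstar hxstarX (z 1) (hzX 1 le_rfl)
    nlinarith [norm_nonneg (xstar - z 1)]
  have hrk : 0 ≤ ‖xstar - z k‖ ^ 2 / 2 := by positivity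
  rw [one_div, inv_mul_eq_div, le_div_iff₀ hpos]
  nlinarith [htel, hr1, hrk]
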